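/- If w² is a factor of a Sturmian word of slope α and w is primitive, then |w| = q_k for some k ≥ 0 or |w| = q_{k,l} for some k ≥ 2 with 0 < l < a_k; that is, the length of w is the denominator of a convergent or semiconvergent of α. -/

import Mathlib

/-!
Write `x t = fract (t α)`, so that letter `j` of the Sturmian word is `1` exactly when
`x (j + 1) + α` wraps past `1`. Let `w²` occur at position `i`, with `n = |w|`. Since the coding
has period `n` along the occurrence, the points `x t`, `t ∈ [i + 1, i + n + 1]`, all lie on the
same side of the wrap point `1 - fract (n α)`; replacing `α` by `-α`, none of them wraps.
If some `m < n` had `fract (m α) < fract (n α)`, then adding `m α` would not wrap either, on a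
window long enough to make `m` a second period of `w²`, and `w` would be a proper power
(Fine–Wilf). So `n` is a record of `fract (m α)` (or of `fract (-m α)`). Choosing `K` of the
right parity with `‖q_{K+2} α‖ < fract (± n α) ≤ ‖q_K α‖` and writing `n = u q_K + v q_{K+1}` in
the basis of consecutive convergents, the record property forces `n < q_{K+2}`, and then `u = 1`
and `0 ≤ v < a_{K+2}`.
-/

/-- The Gauss map iterates: `gaussIter α n` is the `n`-th complete quotient of `α`. -/
noncomputable def gaussIter (α : ℝ) : ℕ → ℝ :=
  fun n => (fun x : ℝ => (Int.fract x)⁻¹)^[n] α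

/-- The partial quotients of the continued fraction expansion of `α`:
`α = [cfA α 0; cfA α 1, cfA α 2, …]`. -/
noncomputable def cfA (α : ℝ) (n : ℕ) : ℤ := ⌊gaussIter α n⌋

/-- The denominators `q_k` of the convergents of `α`. -/
noncomputable def cfQ (α : ℝ) : ℕ → ℤ
  | 0 => 1
  | 1 => cfA α 1
  | (n + 2) => cfA α (n + 2) * cfQ α (n + 1) + cfQ α n

/-- The `n`-th letter of the standard Sturmian word of slope `α`: the coding of the orbit
of the point `α` under rotation by `α`, with `I_0 = [0, 1-α)` coding `0` and
`I_1 = [1-α, 1)` coding `1`. -/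
noncomputable def sturmianLetter (α : ℝ) (n : ℕ) : ℕ :=
  if Int.fract (((n : ℝ) + 1) * α) < 1 - α then 0 else 1

/-- The language `L(α)`: `w` is a factor of the (standard) Sturmian word of slope `α`.
(For irrational `α` this language is the same for every Sturmian word of slope `α`.) -/
noncomputable def InLang (α : ℝ) (w : List ℕ) : Prop :=
  ∃ i : ℕ, w = (List.range w.length).map (fun j => sturmianLetter α (i + j))

/-- A finite word is primitive if it is not a power `u^n` (with `n ≥ 2`) of a shorter word. -/
def PrimitiveWord {A : Type*} (w : List A) : Prop :=
  ¬ ∃ (u : List A) (n : ℕ), 2 ≤ n ∧ w = (List.replicate n u).flatten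

noncomputable def cfP (α : ℝ) : ℕ → ℤ
  | 0 => 0
  | 1 => 1
  | (n + 2) => cfA α (n + 2) * cfP α (n + 1) + cfP α n

/-- The error `(-1)^k (q_k α - p_k) = ‖q_k α‖` of the `k`-th convergent sits at index `k + 1`, so
that `cfDist α 0 = 1` is the same expression for `(q_{-1}, p_{-1}) = (0, 1)`. -/
noncomputable def cfDist (α : ℝ) : ℕ → ℝ
  | 0 => 1
  | (k + 1) => (-1) ^ k * (cfQ α k * α - cfP α k)

theorem Irrational.fract_pos {x : ℝ} (h : Irrational x) : 0 < Int.fract x :=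
  Int.fract_pos.2 (h.ne_int _)

section ContinuedFraction

variable {α : ℝ}

theorem cfDist_one : cfDist α 1 = α := by
  simp [cfDist, cfQ, cfP]

theorem cfDist_add_two (k : ℕ) :
    cfDist α (k + 2) = cfDist α k - cfA α (k + 1) * cfDist α (k + 1) := by
  cases k with
  | zero => simp [cfDist, cfQ, cfP]
  | succ k => simp [cfDist, cfQ, cfP, pow_succ]; ring

theorem gaussIter_succ (k : ℕ) : gaussIter α (k + 1) = (Int.fract (gaussIter α k))⁻¹ :=
  Function.iterate_succ_apply' _ _ _

theorem Irrational.gaussIter (hα : Irrational α) (k : ℕ) : Irrational (gaussIter α k) := by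
  induction k with
  | zero => exact hα
  | succ k ih => rw [gaussIter_succ]; exact (ih.sub_intCast _).inv

theorem cfDist_add_two_eq_mul_fract {k : ℕ} (hk : 0 < cfDist α (k + 1))
    (hg : gaussIter α (k + 1) = cfDist α k / cfDist α (k + 1)) :
    cfDist α (k + 2) = cfDist α (k + 1) * Int.fract (gaussIter α (k + 1)) := by
  rw [cfDist_add_two, Int.fract, ← cfA, hg]
  field_simp

theorem gaussIter_one (h0 : 0 < α) (h1 : α < 1) : gaussIter α 1 = α⁻¹ := by
  rw [gaussIter_succ, gaussIter, Function.iterate_zero_apply, Int.fract_eq_self.2 ⟨h0.le, h1⟩]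

theorem Irrational.neg_one_pow_mul (hα : Irrational α) (k : ℕ) : Irrational ((-1) ^ k * α) := by
  rcases neg_one_pow_eq_or ℝ k with h | h <;> simp [h, hα, hα.neg]

theorem cfP_mul_cfQ_sub (k : ℕ) :
    cfP α (k + 1) * cfQ α k - cfP α k * cfQ α (k + 1) = (-1) ^ k := by
  induction k with
  | zero => simp [cfP, cfQ]
  | succ k ih =>
    simp only [cfP, cfQ, pow_succ] at ih ⊢
    linear_combination -ih

/-- `(q_K, p_K)` and `(q_{K+1}, p_{K+1})` form a basis of `ℤ²`, by `cfP_mul_cfQ_sub`. -/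
theorem exists_fract_eq_cfDist_comb (K : ℕ) (n : ℤ) :
    ∃ u v : ℤ, n = u * cfQ α K + v * cfQ α (K + 1) ∧
      Int.fract (n * ((-1) ^ K * α)) = u * cfDist α (K + 1) - v * cfDist α (K + 2) := by
  set s : ℤ := (-1) ^ K
  have hs : s * s = 1 := by rw [← mul_pow]; norm_num
  set p : ℤ := s * ⌊n * ((-1) ^ K * α)⌋
  have hdet := cfP_mul_cfQ_sub (α := α) K
  refine ⟨s * (n * cfP α (K + 1) - p * cfQ α (K + 1)), s * (p * cfQ α K - n * cfP α K), ?_, ?_⟩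
  · linear_combination (-s * n) * hdet - n * hs
  · have hsR : (s : ℝ) * s = 1 := by exact_mod_cast hs
    have hdetR : (cfP α (K + 1) * cfQ α K - cfP α K * cfQ α (K + 1) : ℝ) = s := by
      exact_mod_cast hdet
    rw [Int.fract]
    simp only [cfDist, p, s] at hsR hdetR ⊢
    push_cast at hsR hdetR ⊢
    generalize (⌊n * ((-1) ^ K * α)⌋ : ℝ) = z
    rw [pow_succ]
    generalize (-1 : ℝ) ^ K = σ at hsR hdetR ⊢
    linear_combination
      (-σ ^ 2 * (n * α - σ * z)) * hdetR + (-n * σ * α + z * (σ ^ 2 + 1)) * hsR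

variable (hα : Irrational α) (h0 : 0 < α) (h1 : α < 1)
include hα h0 h1

theorem cfDist_succ_pos_lt_and_gaussIter (k : ℕ) :
    0 < cfDist α (k + 1) ∧ cfDist α (k + 1) < cfDist α k ∧
      gaussIter α (k + 1) = cfDist α k / cfDist α (k + 1) := by
  induction k with
  | zero =>
    rw [cfDist_one, gaussIter_one h0 h1]
    exact ⟨h0, h1, (one_div α).symm⟩
  | succ k ih =>
    obtain ⟨hpos, -, hg⟩ := ih
    have hfract := (hα.gaussIter (k + 1)).fract_pos
    have hrec := cfDist_add_two_eq_mul_fract hpos hg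
    refine ⟨hrec ▸ mul_pos hpos hfract, ?_, ?_⟩
    · rw [hrec]
      exact mul_lt_of_lt_one_right hpos (Int.fract_lt_one _)
    · rw [gaussIter_succ, hrec]
      field_simp

theorem cfDist_pos (k : ℕ) : 0 < cfDist α k := by
  cases k with
  | zero => exact one_pos
  | succ k => exact (cfDist_succ_pos_lt_and_gaussIter hα h0 h1 k).1

theorem cfDist_strictAnti : StrictAnti (cfDist α) :=
  strictAnti_nat_of_succ_lt fun k => (cfDist_succ_pos_lt_and_gaussIter hα h0 h1 k).2.1

theorem cfDist_succ_lt_one (k : ℕ) : cfDist α (k + 1) < 1 :=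
  cfDist_strictAnti hα h0 h1 k.succ_pos

theorem cfDist_le_one (k : ℕ) : cfDist α k ≤ 1 :=
  (cfDist_strictAnti hα h0 h1).antitone k.zero_le

theorem one_le_cfA_succ (k : ℕ) : 1 ≤ cfA α (k + 1) := by
  obtain ⟨hpos, hlt, hg⟩ := cfDist_succ_pos_lt_and_gaussIter hα h0 h1 k
  rw [cfA, hg, Int.le_floor, Int.cast_one, le_div_iff₀ hpos, one_mul]
  exact hlt.le

theorem cfA_succ_mul_cfDist_lt (k : ℕ) :
    cfA α (k + 1) * cfDist α (k + 1) < cfDist α k := by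
  linarith [cfDist_add_two (α := α) k, cfDist_pos hα h0 h1 (k + 2)]

theorem cfDist_add_two_lt_half (k : ℕ) : cfDist α (k + 2) < cfDist α k / 2 := by
  have ha : (1 : ℝ) ≤ cfA α (k + 1) := by exact_mod_cast one_le_cfA_succ hα h0 h1 k
  have := cfDist_strictAnti hα h0 h1 (Nat.lt_succ_self (k + 1))
  nlinarith [cfDist_add_two (α := α) k, cfDist_pos hα h0 h1 (k + 1)]

theorem exists_cfDist_lt {δ : ℝ} (hδ : 0 < δ) (K : ℕ) : ∃ j, cfDist α (K + 2 * j) < δ := by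
  have hle : ∀ j, cfDist α (K + 2 * j) ≤ (1 / 2) ^ j := by
    intro j
    induction j with
    | zero => simpa using cfDist_le_one hα h0 h1 K
    | succ j ih =>
      have := cfDist_add_two_lt_half hα h0 h1 (K + 2 * j)
      rw [pow_succ, show K + 2 * (j + 1) = K + 2 * j + 2 by ring]
      linarith
  obtain ⟨j, hj⟩ := exists_pow_lt_of_lt_one hδ (by norm_num : (1 / 2 : ℝ) < 1)
  exact ⟨j, (hle j).trans_lt hj⟩

theorem cfQ_pos (k : ℕ) : 0 < cfQ α k := by
  induction k using Nat.strong_induction_on with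
  | _ k ih =>
    match k with
    | 0 => exact one_pos
    | 1 => exact one_le_cfA_succ hα h0 h1 0
    | n + 2 =>
      have := one_le_cfA_succ hα h0 h1 (n + 1)
      have := ih (n + 1) (by omega)
      have := ih n (by omega)
      show 0 < cfA α (n + 2) * cfQ α (n + 1) + cfQ α n
      positivity

theorem fract_cfQ_mul (J : ℕ) : Int.fract (cfQ α J * ((-1) ^ J * α)) = cfDist α (J + 1) := by
  rw [Int.fract_eq_iff]
  refine ⟨(cfDist_pos hα h0 h1 _).le, cfDist_succ_lt_one hα h0 h1 J, (-1) ^ J * cfP α J, ?_⟩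
  simp only [cfDist]
  push_cast
  ring

end ContinuedFraction

def NoWrap (β : ℝ) (s t : ℕ) : Prop :=
  Int.fract (s * β) + Int.fract (t * β) < 1

section NoWrap

variable {β : ℝ}

open Classical in
theorem fract_natCast_add_mul (β : ℝ) (s t : ℕ) :
    Int.fract (((s + t : ℕ) : ℝ) * β) =
      Int.fract (s * β) + Int.fract (t * β) - if NoWrap β s t then 0 else 1 := by
  rw [Int.fract_eq_iff]
  have := Int.fract_nonneg (s * β)
  have := Int.fract_nonneg (t * β)
  have := Int.fract_lt_one (s * β)
  have := Int.fract_lt_one (t * β)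
  refine ⟨?_, ?_, ⌊s * β⌋ + ⌊t * β⌋ + if NoWrap β s t then 0 else 1, ?_⟩
  · split_ifs with h
    · linarith
    · rw [NoWrap, not_lt] at h; linarith
  · split_ifs with h
    · rw [sub_zero]; exact h
    · linarith
  · unfold Int.fract
    split_ifs <;> push_cast <;> ring

theorem noWrap_succ_iff {t n : ℕ} (h : NoWrap β t 1 ↔ NoWrap β (t + n) 1) :
    NoWrap β (t + 1) n ↔ NoWrap β t n := by
  have := Int.fract_nonneg (t * β)
  have := Int.fract_nonneg (n * β)
  have := Int.fract_nonneg ((1 : ℕ) * β)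
  have := Int.fract_lt_one ((1 : ℕ) * β)
  have ht1 := fract_natCast_add_mul β t 1
  have htn := fract_natCast_add_mul β t n
  unfold NoWrap at h ht1 htn ⊢
  rw [ht1]
  rw [htn] at h
  split_ifs at h ⊢ <;> rcases iff_iff_and_or_not_and_not.1 h with ⟨_, _⟩ | ⟨_, _⟩ <;>
    constructor <;> intro <;> linarith

theorem noWrap_neg_iff (hβ : Irrational β) {s t : ℕ} (hs : s ≠ 0) (ht : t ≠ 0) :
    NoWrap (-β) s t ↔ ¬NoWrap β s t := by
  have hst := fract_natCast_add_mul β s t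
  have := (hβ.natCast_mul (show s + t ≠ 0 by omega)).fract_pos
  unfold NoWrap at hst ⊢
  rw [mul_neg, mul_neg, Int.fract_neg (hβ.natCast_mul hs).fract_pos.ne',
    Int.fract_neg (hβ.natCast_mul ht).fract_pos.ne']
  split_ifs at hst with h <;> constructor <;> intro <;> linarith

/-- Past the window, `t β` is `(t + m - n) β` shifted by `fract (n β) - fract (m β)`. -/
theorem noWrap_of_fract_lt {n m a : ℕ} (hmn : m ≤ n)
    (hμ : Int.fract (m * β) < Int.fract (n * β))
    (H : ∀ t, a ≤ t → t ≤ a + n → NoWrap β t n) :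
    ∀ t, a ≤ t → t + m ≤ a + 2 * n → NoWrap β t m := by
  intro t hat hta
  rcases le_or_gt t (a + n) with h | h
  · exact lt_of_le_of_lt (by linarith) (H t hat h)
  obtain ⟨s, rfl⟩ : ∃ s, t = s + (n - m) := ⟨t - (n - m), by omega⟩
  have hs := H s (by omega) (by omega)
  have hd := fract_natCast_add_mul β (n - m) m
  have ht := fract_natCast_add_mul β s (n - m)
  rw [Nat.sub_add_cancel hmn] at hd
  have := Int.fract_nonneg (s * β)
  have := Int.fract_nonneg (((n - m : ℕ) : ℝ) * β)
  have := Int.fract_lt_one (((n - m : ℕ) : ℝ) * β)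
  have := Int.fract_nonneg (m * β)
  unfold NoWrap at hs hd ht ⊢
  split_ifs at hd ht <;> linarith

def WrapPeriodic (β : ℝ) (p a b : ℕ) : Prop :=
  ∀ t, a ≤ t → t + p ≤ b → (NoWrap β t 1 ↔ NoWrap β (t + p) 1)

theorem WrapPeriodic.noWrap_iff {n a b t : ℕ} (h : WrapPeriodic β n a b) (hat : a ≤ t)
    (htb : t + n ≤ b + 1) : NoWrap β t n ↔ NoWrap β a n := by
  obtain ⟨d, rfl⟩ := Nat.exists_eq_add_of_le hat
  induction d with
  | zero => rfl
  | succ d ih =>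
    exact (noWrap_succ_iff (h (a + d) (by omega) (by omega))).trans (ih (by omega) (by omega))

theorem wrapPeriodic_of_noWrap {m a b : ℕ} (H : ∀ t, a ≤ t → t + m ≤ b + 1 → NoWrap β t m) :
    WrapPeriodic β m a b := by
  intro t hat htb
  have h₀ := H t hat (by omega)
  have h₁ := H (t + 1) (by omega) (by omega)
  have ht1 := fract_natCast_add_mul β t 1
  have htm := fract_natCast_add_mul β t m
  have := Int.fract_nonneg (t * β)
  have := Int.fract_nonneg (m * β)
  have := Int.fract_nonneg ((1 : ℕ) * β)
  unfold NoWrap at h₀ h₁ ht1 htm ⊢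
  rw [htm, if_pos h₀]
  rw [ht1] at h₁
  split_ifs at h₁ with h <;> constructor <;> intro <;> linarith

theorem wrapPeriodic_neg_iff (hβ : Irrational β) {p a b : ℕ} (ha : 0 < a) :
    WrapPeriodic (-β) p a b ↔ WrapPeriodic β p a b := by
  refine forall₂_congr fun t hat => imp_congr_right fun _ => ?_
  rw [noWrap_neg_iff hβ (by omega) one_ne_zero, noWrap_neg_iff hβ (by omega) one_ne_zero,
    not_iff_not]

end NoWrap

def IsFractRecord (β : ℝ) (n : ℕ) : Prop :=
  ∀ m : ℕ, 0 < m → m < n → Int.fract (n * β) < Int.fract (m * β)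

def IsSemiconvergentDenom (α : ℝ) (n : ℤ) : Prop :=
  (∃ k : ℕ, n = cfQ α k) ∨
    ∃ k : ℕ, 2 ≤ k ∧ ∃ l : ℤ, 0 < l ∧ l < cfA α k ∧ n = l * cfQ α (k - 1) + cfQ α (k - 2)

theorem IsFractRecord.fract_le {β : ℝ} {n m : ℕ} (h : IsFractRecord β n) (hm : 0 < m)
    (hmn : m ≤ n) : Int.fract (n * β) ≤ Int.fract (m * β) := by
  rcases hmn.lt_or_eq with hmn | rfl
  · exact (h m hm hmn).le
  · exact le_rfl

theorem exists_fract_lt_of_not_isFractRecord {β : ℝ} {n : ℕ} (hβ : Irrational β)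
    (h : ¬IsFractRecord β n) : ∃ m, 0 < m ∧ m < n ∧ Int.fract (m * β) < Int.fract (n * β) := by
  simp only [IsFractRecord, not_forall, not_lt] at h
  obtain ⟨m, hm, hmn, hle⟩ := h
  refine ⟨m, hm, hmn, hle.lt_of_ne fun heq => ?_⟩
  obtain ⟨z, hz⟩ := Int.fract_eq_fract.1 heq
  refine (hβ.intCast_mul (sub_ne_zero.2 (Int.ofNat_inj.not.2 hmn.ne))).ne_int z ?_
  push_cast
  linarith

theorem semiconvergent_coeffs_of_mem_Ioc {e₁ e₂ δ : ℝ} {u v a q q' n : ℤ} (he₂ : 0 < e₂)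
    (ha : a * e₂ < e₁) (hδ : δ = u * e₁ - v * e₂) (hδ0 : 0 < δ) (hδ1 : δ ≤ e₁) (hq : 0 < q)
    (hq' : 0 < q') (hn : n = u * q + v * q') (hn0 : 0 < n) (hna : n < a * q' + q) :
    u = 1 ∧ 0 ≤ v ∧ v < a := by
  have hv : 0 ≤ v := by
    by_contra! hv
    have hvR : (v : ℝ) ≤ -1 := by exact_mod_cast Int.le_sub_one_of_lt hv
    have hu : u < 1 := by
      have : (u : ℝ) < 1 := by nlinarith
      exact_mod_cast this
    nlinarith
  have hu : 0 < u := by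
    by_contra! hu
    have huR : (u : ℝ) ≤ 0 := by exact_mod_cast hu
    have hvR : (0 : ℝ) ≤ v := by exact_mod_cast hv
    nlinarith
  have hva : v < a := by nlinarith
  refine ⟨le_antisymm ?_ hu, hv, hva⟩
  by_contra! hu2
  have huR : (2 : ℝ) ≤ u := by exact_mod_cast hu2
  have hvaR : (v : ℝ) ≤ a := by exact_mod_cast hva.le
  nlinarith

section Records

variable {α : ℝ} (hα : Irrational α) (h0 : 0 < α) (h1 : α < 1)
include hα h0 h1

theorem exists_cfDist_bracket {δ : ℝ} (hδ : 0 < δ) (K₀ : ℕ) (hle : δ ≤ cfDist α (K₀ + 1)) :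
    ∃ j, cfDist α (K₀ + 2 * j + 3) < δ ∧ δ ≤ cfDist α (K₀ + 2 * j + 1) := by
  classical
  have hex := exists_cfDist_lt hα h0 h1 hδ (K₀ + 1)
  have hfind : Nat.find hex ≠ 0 := fun h => by
    have := Nat.find_spec hex
    rw [h] at this
    exact (hle.trans_lt this).false
  obtain ⟨j, hj⟩ := Nat.exists_eq_add_one_of_ne_zero hfind
  refine ⟨j, ?_, ?_⟩
  · have := Nat.find_spec hex
    rwa [hj, show K₀ + 1 + 2 * (j + 1) = K₀ + 2 * j + 3 by ring] at this
  · have := Nat.find_min hex (show j < Nat.find hex by omega)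
    rw [not_lt, show K₀ + 1 + 2 * j = K₀ + 2 * j + 1 by ring] at this
    exact this

theorem isSemiconvergentDenom_of_bracket {K n : ℕ} (hn : 0 < n)
    (hrec : IsFractRecord ((-1) ^ K * α) n)
    (hlo : cfDist α (K + 3) < Int.fract (n * ((-1) ^ K * α)))
    (hhi : Int.fract (n * ((-1) ^ K * α)) ≤ cfDist α (K + 1)) :
    IsSemiconvergentDenom α n := by
  have hlt : (n : ℤ) < cfQ α (K + 2) := by
    by_contra! hle
    have hfract := fract_cfQ_mul hα h0 h1 (K + 2)
    rw [pow_add, neg_one_sq, mul_one] at hfract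
    lift cfQ α (K + 2) to ℕ using (cfQ_pos hα h0 h1 _).le with Q hQ
    have := hrec.fract_le (m := Q) (by have := cfQ_pos hα h0 h1 (K + 2); omega) (by omega)
    push_cast at hfract
    linarith
  obtain ⟨u, v, hnuv, hδ⟩ := exists_fract_eq_cfDist_comb (α := α) K n
  have hcfQ : cfQ α (K + 2) = cfA α (K + 2) * cfQ α (K + 1) + cfQ α K := rfl
  obtain ⟨rfl, hv, hva⟩ := semiconvergent_coeffs_of_mem_Ioc (cfDist_pos hα h0 h1 (K + 2))
    (cfA_succ_mul_cfDist_lt hα h0 h1 (K + 1)) hδ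
    ((hα.neg_one_pow_mul K).natCast_mul hn.ne').fract_pos hhi
    (cfQ_pos hα h0 h1 K) (cfQ_pos hα h0 h1 (K + 1)) hnuv (by exact_mod_cast hn) (hcfQ ▸ hlt)
  rcases hv.eq_or_lt with rfl | hv
  · exact Or.inl ⟨K, by simpa using hnuv⟩
  · exact Or.inr ⟨K + 2, by omega, v, hv, hva, by rw [hnuv]; simp; ring⟩

theorem isSemiconvergentDenom_of_isFractRecord {K₀ n : ℕ} (hn : 0 < n)
    (hrec : IsFractRecord ((-1) ^ K₀ * α) n) (hq : cfQ α K₀ ≤ n) :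
    IsSemiconvergentDenom α n := by
  have hδ : 0 < Int.fract (n * ((-1) ^ K₀ * α)) :=
    ((hα.neg_one_pow_mul K₀).natCast_mul hn.ne').fract_pos
  have hle : Int.fract (n * ((-1) ^ K₀ * α)) ≤ cfDist α (K₀ + 1) := by
    rw [← fract_cfQ_mul hα h0 h1 K₀]
    lift cfQ α K₀ to ℕ using (cfQ_pos hα h0 h1 _).le with Q hQ
    exact hrec.fract_le (by have := cfQ_pos hα h0 h1 K₀; omega) (by omega)
  obtain ⟨j, hlo, hhi⟩ := exists_cfDist_bracket hα h0 h1 hδ K₀ hle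
  have hsign : (-1 : ℝ) ^ (K₀ + 2 * j) = (-1) ^ K₀ := by rw [pow_add, pow_mul]; norm_num
  exact isSemiconvergentDenom_of_bracket hα h0 h1 (K := K₀ + 2 * j) hn (hsign ▸ hrec)
    (by rwa [hsign]) (by rwa [hsign])

end Records

section Words

variable {A : Type*}

theorem PrimitiveWord.ne_nil {w : List A} (h : PrimitiveWord w) : w ≠ [] := by
  rintro rfl
  exact h ⟨[], 2, le_rfl, by simp⟩

theorem List.flatten_replicate_map_range (f : ℕ → A) (g K : ℕ) :
    (replicate K ((range g).map f)).flatten = (range (K * g)).map fun j => f (j % g) := by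
  induction K with
  | zero => simp
  | succ K ih =>
    rw [replicate_succ, flatten_cons, ih, add_mul, one_mul, add_comm, range_add, map_append,
      map_map]
    congr 1
    · exact map_congr_left fun j hj => by rw [Nat.mod_eq_of_lt (mem_range.1 hj)]
    · exact map_congr_left fun j _ => by simp

theorem List.map_range_of_append_self_eq {f : ℕ → A} {w : List A}
    (h : w ++ w = (range (w ++ w).length).map f) :
    w = (range w.length).map f ∧ ∀ j, j < w.length → f j = f (j + w.length) := by
  rw [length_append, range_add, map_append, map_map] at h
  obtain ⟨h₁, h₂⟩ := append_inj h (by simp)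
  refine ⟨h₁, fun j hj => ?_⟩
  have := map_inj_left.1 (h₁.symm.trans h₂) j (mem_range.2 hj)
  simpa [add_comm] using this

/-- A weak form of the Fine–Wilf theorem. In `ZMod n`, `gcd m n` is a multiple of `m`. -/
theorem eq_mod_gcd_of_periods {f : ℕ → A} {m n : ℕ} (hm : 0 < m) (hmn : m < n)
    (hpn : ∀ j, j < n → f j = f (j + n)) (hpm : ∀ j, j + m < 2 * n → f j = f (j + m)) :
    ∀ r, r < n → f r = f (r % Nat.gcd m n) := by
  have : NeZero n := ⟨by omega⟩
  have hcyc : ∀ r, r < n → f ((r + m) % n) = f r := by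
    intro r hr
    rcases lt_or_ge (r + m) n with h | h
    · rw [Nat.mod_eq_of_lt h, hpm r (by omega)]
    · rw [Nat.mod_eq_sub_mod h, Nat.mod_eq_of_lt (by omega), hpn _ (by omega),
        Nat.sub_add_cancel h, hpm r (by omega)]
  set F : ZMod n → A := fun x => f x.val
  have hF : Function.Periodic F m := fun x => by
    simp only [F, ZMod.val_add, ZMod.val_natCast, Nat.mod_eq_of_lt hmn]
    exact hcyc _ (ZMod.val_lt x)
  have hgcd : ((Nat.gcd m n : ℕ) : ZMod n) = (Nat.gcdA m n : ℤ) * m := by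
    have := congrArg ((↑) : ℤ → ZMod n) (Nat.gcd_eq_gcd_ab m n)
    push_cast at this
    rw [this, ZMod.natCast_self]
    ring
  have hper : Function.Periodic (fun r : ℕ => F r) (Nat.gcd m n) := fun r => by
    simp only [Nat.cast_add, hgcd, hF.int_mul _ _]
  intro r hr
  have hg : r % Nat.gcd m n < n :=
    (Nat.mod_lt _ (Nat.gcd_pos_of_pos_left n hm)).trans_le
      ((Nat.gcd_le_left n hm).trans hmn.le)
  simpa [F, ZMod.val_natCast, Nat.mod_eq_of_lt hr, Nat.mod_eq_of_lt hg] using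
    (hper.map_mod_nat r).symm

theorem not_primitiveWord_of_periods {f : ℕ → A} {m n : ℕ} (hm : 0 < m) (hmn : m < n)
    (hpn : ∀ j, j < n → f j = f (j + n)) (hpm : ∀ j, j + m < 2 * n → f j = f (j + m)) :
    ¬PrimitiveWord ((List.range n).map f) := by
  obtain ⟨k, hk⟩ := Nat.gcd_dvd_right m n
  have hgm := Nat.gcd_le_left n hm
  have hg : 0 < Nat.gcd m n := Nat.gcd_pos_of_pos_left n hm
  have hk2 : 2 ≤ k := by
    by_contra! hk2
    interval_cases k <;> omega
  refine fun h => h ⟨(List.range (Nat.gcd m n)).map f, k, hk2, ?_⟩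
  rw [List.flatten_replicate_map_range, mul_comm, ← hk]
  exact List.map_congr_left fun r hr => eq_mod_gcd_of_periods hm hmn hpn hpm r (List.mem_range.1 hr)

end Words

section Sturmian

variable {α : ℝ}

theorem sturmianLetter_eq_zero_iff (h0 : 0 < α) (h1 : α < 1) (j : ℕ) :
    sturmianLetter α j = 0 ↔ NoWrap α (j + 1) 1 := by
  rw [NoWrap, Nat.cast_one, one_mul, Int.fract_eq_self.2 ⟨h0.le, h1⟩, Nat.cast_succ,
    ← lt_sub_iff_add_lt, sturmianLetter]
  split_ifs with h <;> simp [h]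

theorem sturmianLetter_eq_iff (h0 : 0 < α) (h1 : α < 1) (j k : ℕ) :
    sturmianLetter α j = sturmianLetter α k ↔ (NoWrap α (j + 1) 1 ↔ NoWrap α (k + 1) 1) := by
  rw [← sturmianLetter_eq_zero_iff h0 h1, ← sturmianLetter_eq_zero_iff h0 h1]
  unfold sturmianLetter
  split_ifs <;> simp

theorem wrapPeriodic_iff_sturmianLetter (h0 : 0 < α) (h1 : α < 1) (i L p : ℕ) :
    WrapPeriodic α p (i + 1) (i + L) ↔
      ∀ j, j + p < L → sturmianLetter α (i + j) = sturmianLetter α (i + (j + p)) := by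
  constructor
  · intro h j hj
    rw [sturmianLetter_eq_iff h0 h1, show i + (j + p) + 1 = i + j + 1 + p by ring]
    exact h _ (by omega) (by omega)
  · intro h t hat htb
    obtain ⟨j, rfl⟩ : ∃ j, t = i + j + 1 := ⟨t - (i + 1), by omega⟩
    have := h j (by omega)
    rwa [sturmianLetter_eq_iff h0 h1, show i + (j + p) + 1 = i + j + 1 + p by ring] at this

/-- If `(n + 1) α ≤ 1`, the `n + 1` points `fract (-t α)` of the window, all in `[0, n α)`, would
step down by `α` without ever wrapping. -/
theorem cfA_one_le_of_forall_noWrap_neg (h0 : 0 < α) (h1 : α < 1) {n a : ℕ} (hn : 0 < n)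
    (H : ∀ t, a ≤ t → t ≤ a + n → NoWrap (-α) t n) : cfA α 1 ≤ n := by
  rw [cfA, gaussIter_one h0 h1, Int.floor_le_iff, inv_lt_iff_one_lt_mul₀ h0]
  by_contra! hle
  push_cast at hle
  have hnα : 0 < (n : ℝ) * α := by positivity
  have hfract : ∀ k : ℕ, 0 < k → (k : ℝ) * α < 1 → Int.fract (k * -α) = 1 - k * α :=
    fun k hk hkα => Int.fract_eq_iff.2
      ⟨by linarith, by linarith [show 0 < (k : ℝ) * α by positivity], -1, by push_cast; ring⟩
  have hε := hfract n hn (by linarith)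
  have hb : Int.fract ((1 : ℕ) * -α) = 1 - α := by simpa using hfract 1 one_pos (by simpa)
  have H' : ∀ t, a ≤ t → t ≤ a + n → Int.fract (t * -α) < n * α := fun t hat hta => by
    have := H t hat hta
    rw [NoWrap, hε] at this
    linarith
  have hstep : ∀ d, d ≤ n → Int.fract (((a + d : ℕ) : ℝ) * -α) = Int.fract (a * -α) - d * α := by
    intro d
    induction d with
    | zero => simp
    | succ d ih =>
      intro hd
      rw [← add_assoc]
      have hsucc := fract_natCast_add_mul (-α) (a + d) 1
      have hlt := H' (a + d + 1) (by omega) (by omega)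
      have hnn := Int.fract_nonneg (((a + d : ℕ) : ℝ) * -α)
      rw [hb, ih (by omega)] at hsucc
      rw [ih (by omega)] at hnn
      split_ifs at hsucc
      · rw [hsucc] at hlt; linarith
      · rw [hsucc]; push_cast; ring
  have := hstep n le_rfl
  have := Int.fract_nonneg (((a + n : ℕ) : ℝ) * -α)
  have := H' a le_rfl (by omega)
  linarith

theorem isSemiconvergentDenom_of_forall_noWrap (hα : Irrational α) (h0 : 0 < α) (h1 : α < 1)
    {K₀ n i : ℕ} {β : ℝ} (hβ : β = (-1) ^ K₀ * α)
    (hn : 0 < n) (hq : cfQ α K₀ ≤ n) (hnw : ∀ t, i + 1 ≤ t → t ≤ i + 1 + n → NoWrap β t n)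
    (hshort : ∀ m, 0 < m → m < n → ¬WrapPeriodic β m (i + 1) (i + 2 * n)) :
    IsSemiconvergentDenom α n := by
  subst hβ
  by_cases hrec : IsFractRecord ((-1) ^ K₀ * α) n
  · exact isSemiconvergentDenom_of_isFractRecord hα h0 h1 hn hrec hq
  obtain ⟨m, hm, hmn, hμ⟩ := exists_fract_lt_of_not_isFractRecord (hα.neg_one_pow_mul K₀) hrec
  refine absurd (wrapPeriodic_of_noWrap fun t hit hti => ?_) (hshort m hm hmn)
  exact noWrap_of_fract_lt hmn.le hμ hnw t hit (by omega)

end Sturmian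

theorem square_length_convergent_general (α : ℝ) (hα : Irrational α) (h0 : 0 < α) (h2 : α < 1 / 2)
    (w : List ℕ) (hprim : PrimitiveWord w) (hsq : InLang α (w ++ w)) :
    (∃ k : ℕ, (w.length : ℤ) = cfQ α k) ∨
      (∃ k : ℕ, 2 ≤ k ∧ ∃ l : ℤ, 0 < l ∧ l < cfA α k ∧
        (w.length : ℤ) = l * cfQ α (k - 1) + cfQ α (k - 2)) := by
  have h1 : α < 1 := by linarith
  obtain ⟨i, hi⟩ := hsq
  obtain ⟨hw, hper⟩ := List.map_range_of_append_self_eq hi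
  set n := w.length
  have hn : 0 < n := List.length_pos_iff.2 hprim.ne_nil
  have hwp : WrapPeriodic α n (i + 1) (i + 2 * n) :=
    (wrapPeriodic_iff_sturmianLetter h0 h1 i _ n).2 fun j hj => hper j (by omega)
  have hshort : ∀ m, 0 < m → m < n → ¬WrapPeriodic α m (i + 1) (i + 2 * n) :=
    fun m hm hmn hm' => not_primitiveWord_of_periods hm hmn hper
      ((wrapPeriodic_iff_sturmianLetter h0 h1 i _ m).1 hm') (hw ▸ hprim)
  by_cases hI : NoWrap α (i + 1) n
  · refine isSemiconvergentDenom_of_forall_noWrap hα h0 h1 (K₀ := 0) (by ring) hn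
      (by rw [cfQ]; exact_mod_cast hn) (fun t hit hti => (hwp.noWrap_iff hit (by omega)).2 hI)
      hshort
  · have hII : ∀ t, i + 1 ≤ t → t ≤ i + 1 + n → NoWrap (-α) t n := fun t hit hti =>
      (noWrap_neg_iff hα (by omega) hn.ne').2 (mt (hwp.noWrap_iff hit (by omega)).1 hI)
    refine isSemiconvergentDenom_of_forall_noWrap hα h0 h1 (K₀ := 1) (by ring) hn
      (cfA_one_le_of_forall_noWrap_neg h0 h1 hn hII) hII fun m hm hmn hm' => ?_
    exact hshort m hm hmn ((wrapPeriodic_neg_iff hα i.succ_pos).1 hm')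

/-- If `w` is primitive and `w²` is a factor of a Sturmian word of slope `α`
(`α ∈ (0, 1/2)` irrational), then `|w|` is the denominator `q_k` of a convergent or the
denominator `q_{k,l} = l q_{k-1} + q_{k-2}` (`k ≥ 2`, `0 < l < a_k`) of a semiconvergent. -/
theorem square_length_convergent (α : ℝ) (hα : Irrational α) (h0 : 0 < α) (h2 : α < 1 / 2)
    (w : List ℕ) (hw : w ≠ []) (hprim : PrimitiveWord w) (hsq : InLang α (w ++ w)) :
    (∃ k : ℕ, (w.length : ℤ) = cfQ α k) ∨
      (∃ k : ℕ, 2 ≤ k ∧ ∃ l : ℤ, 0 < l ∧ l < cfA α k ∧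
        (w.length : ℤ) = l * cfQ α (k - 1) + cfQ α (k - 2)) :=
  square_length_convergent_general α hα h0 h2 w hprim hsq
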